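/- arXiv:2512.11205 — 2 statements merged into one kernel-verified Lean document; each statement's English description precedes it below -/
import Mathlib

section
/- (Pointwise nonlinear estimates) Let p > 0 and f(z) = |z|^p z for z ∈ ℂ. Then: (i) there exists C_p > 0 such that for all c₁, c₂ ∈ ℂ, |f(c₁+c₂) − f(c₁)| ≤ C_p (|c₂|^{p+1} + |c₂||c₁|^p); (ii) for every J ∈ ℕ there exists C_{J,p} > 0 such that for all c₁, …, c_J ∈ ℂ, |f(Σ_{j=1}^{J} c_j) − Σ_{j=1}^{J} f(c_j)| ≤ C_{J,p} Σ_{j≠k} |c_j| |c_k|^p. -/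
open MeasureTheory Filter
open scoped ENNReal Topology ComplexConjugate FourierTransform RealInnerProductSpace

noncomputable section

/-- The plane `ℝ²`, as a Euclidean space. -/
abbrev Plane : Type := EuclideanSpace ℝ (Fin 2)

namespace NLS2d

/-- The point of `ℝ²` with polar coordinates `(r, θ)`. -/
def pt (r θ : ℝ) : Plane :=
  (WithLp.equiv 2 (Fin 2 → ℝ)).symm ![r * Real.cos θ, r * Real.sin θ]

/-- The free Schrödinger group `e^{itΔ}` on `ℝ²`, i.e. the Fourier multiplier with symbol
`e^{-it|ξ|²}`, realized for `t ≠ 0` through its explicit convolution kernel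
`(4πit)⁻¹ e^{i|x−y|²/(4t)}`. -/
def schrod (t : ℝ) (f : Plane → ℂ) : Plane → ℂ :=
  if t = 0 then f
  else fun x => (4 * Real.pi * Complex.I * (t : ℂ))⁻¹ *
    ∫ y : Plane, Complex.exp (Complex.I * (‖x - y‖ : ℂ) ^ 2 / (4 * (t : ℂ))) * f y

/-- `g` is the weak (distributional) gradient of `f` on `ℝ²`. -/
def HasWeakGradient (f : Plane → ℂ) (g : Plane → EuclideanSpace ℂ (Fin 2)) : Prop :=
  ∀ φ : Plane → ℝ, ContDiff ℝ (⊤ : ℕ∞) φ → HasCompactSupport φ → ∀ i : Fin 2,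
    ∫ x : Plane, f x * ((fderiv ℝ φ x (EuclideanSpace.single i 1) : ℝ) : ℂ) =
      - ∫ x : Plane, (WithLp.equiv 2 (Fin 2 → ℂ) (g x)) i * ((φ x : ℝ) : ℂ)

/-- Membership in the Sobolev space `H¹(ℝ²)`: `f ∈ L²` and `f` has a weak gradient in `L²`. -/
def InH1 (f : Plane → ℂ) : Prop :=
  MemLp f 2 volume ∧
    ∃ g : Plane → EuclideanSpace ℂ (Fin 2), HasWeakGradient f g ∧ MemLp g 2 volume

open scoped Classical in
/-- A choice of weak gradient for `f` (junk value `0` if none exists). -/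
def weakGrad (f : Plane → ℂ) : Plane → EuclideanSpace ℂ (Fin 2) :=
  if h : ∃ g : Plane → EuclideanSpace ℂ (Fin 2), HasWeakGradient f g ∧ MemLp g 2 volume then
    h.choose else 0

/-- The `H¹(ℝ²)` norm, `‖f‖_{H¹}² = ‖f‖_{L²}² + ‖∇f‖_{L²}²`. -/
def h1Norm (f : Plane → ℂ) : ℝ :=
  Real.sqrt ((eLpNorm f 2 volume).toReal ^ 2 + (eLpNorm (weakGrad f) 2 volume).toReal ^ 2)

/-- The nonlinearity `a(x)|f|^p f`. -/
def nlin (p : ℝ) (a : Plane → ℝ) (f : Plane → ℂ) : Plane → ℂ :=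
  fun x => ((a x * ‖f x‖ ^ p : ℝ) : ℂ) * f x

/-- A global solution of `i∂_t u + Δu = a|u|^p u`: a bounded, `H¹`-continuous map
`u : ℝ → H¹(ℝ²)` satisfying the Duhamel formula. -/
def IsSolution (p : ℝ) (a : Plane → ℝ) (u : ℝ → Plane → ℂ) : Prop :=
  (∀ t, InH1 (u t)) ∧
  (∃ C : ℝ, ∀ t, h1Norm (u t) ≤ C) ∧
  (∀ t₀ : ℝ, Tendsto (fun t => h1Norm (fun x => u t x - u t₀ x)) (𝓝 t₀) (𝓝 0)) ∧
  ∀ t t₀ : ℝ, ∀ x : Plane,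
    u t x = schrod (t - t₀) (u t₀) x
      - Complex.I * ∫ s in t₀..t, schrod (t - s) (nlin p a (u s)) x

/-- The mixed space-time Lebesgue norm `‖u‖_{L^q_t L^r_x(I×ℝ²)}`. -/
def stNorm (q r : ℝ) (I : Set ℝ) (u : ℝ → Plane → ℂ) : ℝ≥0∞ :=
  eLpNorm (fun t => (eLpNorm (u t) (ENNReal.ofReal r) volume).toReal)
    (ENNReal.ofReal q) (volume.restrict I)

/-- The exponent `q` : `q = (p²+2p)/2` if `p > 2`, `q = 2p+4` if `p ≤ 2`. -/
def qExp (p : ℝ) : ℝ := if 2 < p then (p ^ 2 + 2 * p) / 2 else 2 * p + 4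

/-- The exponent `r` : `r = p+2` if `p > 2`, `r = (4p+8)/p` if `p ≤ 2`. -/
def rExp (p : ℝ) : ℝ := if 2 < p then p + 2 else (4 * p + 8) / p

/-- The exponent `α` : `α = (p²+2p)/(2p+2)` if `p > 2`, `α = (2p+4)/(p+1)` if `p ≤ 2`. -/
def alphaExp (p : ℝ) : ℝ := if 2 < p then (p ^ 2 + 2 * p) / (2 * p + 2) else (2 * p + 4) / (p + 1)

/-- The exponent `β` : `β = (p+2)/(p+1)` if `p > 2`, `β = (4p+8)/(3p+8)` if `p ≤ 2`. -/
def betaExp (p : ℝ) : ℝ := if 2 < p then (p + 2) / (p + 1) else (4 * p + 8) / (3 * p + 8)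

/-- The exponent `ρ` : `ρ = ∞` if `p > 2`, `ρ = 4/(4−p)` if `p ≤ 2`. -/
def rhoExp (p : ℝ) : ℝ≥0∞ := if 2 < p then ∞ else ENNReal.ofReal (4 / (4 - p))

/-- The norm `‖u‖_{X(I)} = ‖u‖_{L^q_t L^r_x(I×ℝ²)}`. -/
def XNorm (p : ℝ) (I : Set ℝ) (u : ℝ → Plane → ℂ) : ℝ≥0∞ := stNorm (qExp p) (rExp p) I u

/-- The norm `‖u‖_{Y(I)} = ‖u‖_{L^α_t L^β_x(I×ℝ²)}`. -/
def YNorm (p : ℝ) (I : Set ℝ) (u : ℝ → Plane → ℂ) : ℝ≥0∞ := stNorm (alphaExp p) (betaExp p) I u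

/-- An admissible weight: nonnegative, repulsive (`x·∇a(x) ≤ 0`), with `a, ∇a ∈ L^∞`
(and additionally `a, ∇a ∈ L¹` when `p ≤ 2`), and possessing a continuous radial limit
function `ã` on the circle. -/
def Admissible (p : ℝ) (a : Plane → ℝ) : Prop :=
  (∀ x, 0 ≤ a x) ∧ Differentiable ℝ a ∧
  (∀ x : Plane, ⟪x, gradient a x⟫ ≤ 0) ∧
  MemLp a ∞ volume ∧ MemLp (gradient a) ∞ volume ∧
  (p ≤ 2 → Integrable a volume ∧ Integrable (gradient a) volume) ∧
  ∃ atilde : ℝ → ℝ, Continuous atilde ∧ (∀ θ, atilde (θ + 2 * Real.pi) = atilde θ) ∧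
    ∀ θ : ℝ, Tendsto (fun R : ℝ => a (pt R θ)) atTop (𝓝 (atilde θ))

/-- The mass `M(f) = ∫ |f|²`. -/
def mass (f : Plane → ℂ) : ℝ := ∫ x : Plane, ‖f x‖ ^ 2

/-- The energy `E(f) = ∫ ½|∇f|² + (a(x)/(p+2))|f|^{p+2}`. -/
def energy (p : ℝ) (a : Plane → ℝ) (f : Plane → ℂ) : ℝ :=
  ∫ x : Plane, (1 / 2) * ‖weakGrad f x‖ ^ 2 + (a x / (p + 2)) * ‖f x‖ ^ (p + 2)

/-- `u` scatters in `H¹` forward in time. -/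
def ScattersForward (u : ℝ → Plane → ℂ) : Prop :=
  ∃ uPlus : Plane → ℂ, InH1 uPlus ∧
    Tendsto (fun t => h1Norm (fun x => u t x - schrod t uPlus x)) atTop (𝓝 0)

/-- `u` scatters in `H¹` backward in time. -/
def ScattersBackward (u : ℝ → Plane → ℂ) : Prop :=
  ∃ uMinus : Plane → ℂ, InH1 uMinus ∧
    Tendsto (fun t => h1Norm (fun x => u t x - schrod t uMinus x)) atBot (𝓝 0)

/-- `u` scatters in `H¹` in both time directions. -/
def ScattersH1 (u : ℝ → Plane → ℂ) : Prop := ScattersForward u ∧ ScattersBackward u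

/-- The Laplacian of a real-valued function on `ℝ²`. -/
def lap (f : Plane → ℝ) (x : Plane) : ℝ :=
  ∑ i : Fin 2, fderiv ℝ (fun y => fderiv ℝ f y (EuclideanSpace.single i 1)) x
    (EuclideanSpace.single i 1)

/-- `L(E)`: the supremum of `‖u‖_{X(ℝ)}` over all global solutions with `M(u)+E(u) < E`. -/
def LFun (p : ℝ) (a : Plane → ℝ) (E : ℝ) : ℝ≥0∞ :=
  ⨆ (u : ℝ → Plane → ℂ)
    (_ : IsSolution p a u ∧ mass (u 0) + energy p a (u 0) < E),
    XNorm p Set.univ u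

/-- The critical mass/energy threshold `E_c = sup {E ≥ 0 : L(E) < ∞}` (as an extended real). -/
def Ec (p : ℝ) (a : Plane → ℝ) : ℝ≥0∞ :=
  ⨆ (E : ℝ) (_ : 0 ≤ E ∧ LFun p a E < ⊤), ENNReal.ofReal E

/-- The vector `x g(x) + 2it ∇g(x)`. -/
def zVec (t : ℝ) (g : Plane → ℂ) (x : Plane) : EuclideanSpace ℂ (Fin 2) :=
  (WithLp.equiv 2 (Fin 2 → ℂ)).symm fun i =>
    ((WithLp.equiv 2 (Fin 2 → ℝ) x i : ℝ) : ℂ) * g x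
      + 2 * Complex.I * (t : ℂ) * WithLp.equiv 2 (Fin 2 → ℂ) (weakGrad g x) i

/-- The norm `‖g‖_{Z(t)} = ‖ t^{1/2} (x g + 2it∇g) / (⟨t⟩³+|x|³)^{1/2} ‖_{L²(ℝ²)}`. -/
def Znorm (t : ℝ) (g : Plane → ℂ) : ℝ≥0∞ :=
  eLpNorm (fun x : Plane =>
    ((Real.sqrt t / Real.sqrt ((1 + t ^ 2) ^ ((3 : ℝ) / 2) + ‖x‖ ^ 3) : ℝ) : ℂ) • zVec t g x)
    2 volume

/-- The `H¹(ℝ²)` inner product `⟨f, g⟩ = ∫ f ḡ + ∫ ∇f · ∇ḡ`. -/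
def h1Inner (f g : Plane → ℂ) : ℂ :=
  (∫ x : Plane, conj (g x) * f x) +
    ∫ x : Plane, (inner ℂ (weakGrad g x) (weakGrad f x) : ℂ)

/-- Weak convergence in `H¹(ℝ²)`. -/
def WeakH1Tendsto (f : ℕ → Plane → ℂ) (φ : Plane → ℂ) : Prop :=
  ∀ g : Plane → ℂ, InH1 g →
    Tendsto (fun n => h1Inner (f n) g) atTop (𝓝 (h1Inner φ g))

/-- The Littlewood–Paley projection to frequency `N`, with multiplier `ψ(ξ/N)`. -/
def lpProj (ψ : Plane → ℝ) (N : ℝ) (f : Plane → ℂ) : Plane → ℂ :=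
  𝓕⁻ (fun ξ : Plane => ((ψ (N⁻¹ • ξ) : ℝ) : ℂ) * 𝓕 f ξ)

end NLS2d

open NLS2d

noncomputable def Fp (p : ℝ) (z : ℂ) : ℂ := ((‖z‖ ^ p : ℝ) : ℂ) * z

lemma one_sub_rpow_le (p : ℝ) (hp : 0 < p) {x : ℝ} (hx0 : 0 ≤ x) (hx1 : x ≤ 1) :
    1 - x ^ p ≤ max 1 p * (1 - x) := by
  rcases le_or_gt p 1 with h1 | h1
  · rcases eq_or_lt_of_le hx0 with h0 | h0
    · rw [← h0, Real.zero_rpow hp.ne']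
      have : (1:ℝ) ≤ max 1 p := le_max_left 1 p
      nlinarith
    · have hx : x ^ (1:ℝ) ≤ x ^ p := Real.rpow_le_rpow_of_exponent_ge h0 hx1 h1
      rw [Real.rpow_one] at hx
      have : (1:ℝ) ≤ max 1 p := le_max_left 1 p
      nlinarith
  · have hb := one_add_mul_self_le_rpow_one_add (s := x - 1) (by linarith) h1.le
    have hx : 1 + p * (x - 1) ≤ x ^ p := by simpa using hb
    have hpK : p ≤ max 1 p := le_max_right 1 p
    nlinarith

lemma rpow_sub_rpow_mul_le (p : ℝ) (hp : 0 < p) {a b : ℝ} (hb : 0 ≤ b) (hba : b ≤ a) :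
    (a ^ p - b ^ p) * a ≤ max 1 p * a ^ p * (a - b) := by
  rcases eq_or_lt_of_le (hb.trans hba) with h0 | h0
  · have hb0 : b = 0 := le_antisymm (hba.trans h0.symm.le) hb
    rw [← h0, hb0, Real.zero_rpow hp.ne']
    simp
  · have hx0 : 0 ≤ b / a := div_nonneg hb h0.le
    have hx1 : b / a ≤ 1 := (div_le_one h0).2 hba
    have key := one_sub_rpow_le p hp hx0 hx1
    have hbp : b ^ p = (b / a) ^ p * a ^ p := by
      rw [← Real.mul_rpow hx0 h0.le, div_mul_cancel₀ _ h0.ne']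
    have hap : (0:ℝ) ≤ a ^ p := Real.rpow_nonneg h0.le p
    have hmul := mul_le_mul_of_nonneg_left key hap
    calc (a ^ p - b ^ p) * a = a ^ p * (1 - (b / a) ^ p) * a := by rw [hbp]; ring
      _ ≤ a ^ p * (max 1 p * (1 - b / a)) * a := by nlinarith
      _ = max 1 p * a ^ p * (a - b) := by field_simp

lemma key_le (p : ℝ) (hp : 0 < p) {z w : ℂ} (hwz : ‖w‖ ≤ ‖z‖) :
    ‖Fp p z - Fp p w‖ ≤ (1 + max 1 p) * ‖z‖ ^ p * ‖z - w‖ := by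
  set a := ‖z‖
  set b := ‖w‖
  have ha : 0 ≤ a := norm_nonneg z
  have hb : 0 ≤ b := norm_nonneg w
  have hsplit : Fp p z - Fp p w =
      ((a ^ p : ℝ) : ℂ) * (z - w) + (((a ^ p - b ^ p : ℝ)) : ℂ) * w := by
    simp only [Fp]; push_cast; ring
  have hab : a - b ≤ ‖z - w‖ := by
    have := norm_sub_norm_le z w
    simpa using this
  have hzw : 0 ≤ ‖z - w‖ := norm_nonneg _
  have h1 : ‖((a ^ p : ℝ) : ℂ) * (z - w)‖ = a ^ p * ‖z - w‖ := by
    rw [norm_mul, Complex.norm_real, Real.norm_eq_abs, abs_of_nonneg (Real.rpow_nonneg ha p)]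
  have h2 : ‖(((a ^ p - b ^ p : ℝ)) : ℂ) * w‖ ≤ max 1 p * a ^ p * ‖z - w‖ := by
    rw [norm_mul, Complex.norm_real, Real.norm_eq_abs]
    have hnn : 0 ≤ a ^ p - b ^ p := by
      have := Real.rpow_le_rpow hb hwz hp.le
      linarith
    rw [abs_of_nonneg hnn]
    have step : (a ^ p - b ^ p) * b ≤ (a ^ p - b ^ p) * a := by nlinarith
    have step2 := rpow_sub_rpow_mul_le p hp hb hwz
    have hKp : 0 ≤ max 1 p * a ^ p := by positivity
    nlinarith
  calc ‖Fp p z - Fp p w‖ ≤ _ + _ := hsplit ▸ norm_add_le _ _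
    _ ≤ (1 + max 1 p) * a ^ p * ‖z - w‖ := by rw [h1]; nlinarith [Real.rpow_nonneg ha p]

lemma key_le' (p : ℝ) (hp : 0 < p) (z w : ℂ) :
    ‖Fp p z - Fp p w‖ ≤
      (1 + max 1 p) * max (‖z‖) (‖w‖) ^ p * ‖z - w‖ := by
  rcases le_total (‖w‖) (‖z‖) with h | h
  · rw [max_eq_left h]; exact key_le p hp h
  · rw [max_eq_right h]
    have := key_le p hp (z := w) (w := z) h
    calc ‖Fp p z - Fp p w‖ = ‖Fp p w - Fp p z‖ := by
          rw [← norm_neg]; ring_nf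
      _ ≤ (1 + max 1 p) * ‖w‖ ^ p * ‖w - z‖ := this
      _ = (1 + max 1 p) * ‖w‖ ^ p * ‖z - w‖ := by
          rw [← norm_neg (w - z)]; ring_nf

lemma max_rpow_le (p : ℝ) {x y : ℝ} (hx : 0 ≤ x) (hy : 0 ≤ y) :
    max x y ^ p ≤ x ^ p + y ^ p := by
  rcases max_cases x y with ⟨h, _⟩ | ⟨h, _⟩ <;> rw [h]
  · nlinarith [Real.rpow_nonneg hy p]
  · nlinarith [Real.rpow_nonneg hx p]

lemma part_one (p : ℝ) (hp : 0 < p) : ∃ C : ℝ, 0 < C ∧ ∀ c₁ c₂ : ℂ,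
    ‖Fp p (c₁ + c₂) - Fp p c₁‖ ≤
      C * (‖c₂‖ ^ (p + 1) + ‖c₂‖ * ‖c₁‖ ^ p) := by
  refine ⟨(1 + max 1 p) * 2 ^ p, by positivity, fun c₁ c₂ => ?_⟩
  have h1 := key_le' p hp (c₁ + c₂) c₁
  have habs : ‖c₁ + c₂ - c₁‖ = ‖c₂‖ := by ring_nf
  rw [habs] at h1
  set a := ‖c₁‖
  set b := ‖c₂‖
  have ha : 0 ≤ a := norm_nonneg _
  have hb : 0 ≤ b := norm_nonneg _
  have hM : max (‖c₁ + c₂‖) a ≤ 2 * max a b := by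
    have h3 : ‖c₁ + c₂‖ ≤ a + b := norm_add_le _ _
    have : a + b ≤ 2 * max a b := by
      rcases max_cases a b with ⟨h, h'⟩ | ⟨h, h'⟩ <;> rw [h] <;> linarith
    refine max_le (h3.trans this) ?_
    calc a ≤ max a b := le_max_left _ _
      _ ≤ 2 * max a b := by nlinarith [hb.trans (le_max_right a b)]
  have hMp : max (‖c₁ + c₂‖) a ^ p ≤ 2 ^ p * (a ^ p + b ^ p) := by
    calc max (‖c₁ + c₂‖) a ^ p ≤ (2 * max a b) ^ p :=
        Real.rpow_le_rpow (le_max_of_le_right ha) hM hp.le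
      _ = 2 ^ p * max a b ^ p := Real.mul_rpow (by norm_num) (le_trans ha (le_max_left a b))
      _ ≤ 2 ^ p * (a ^ p + b ^ p) := by
          have := max_rpow_le p ha hb
          nlinarith [Real.rpow_nonneg (show (0:ℝ) ≤ 2 by norm_num) p]
  have hbp1 : b ^ p * b = b ^ (p + 1) := by
    rw [Real.rpow_add' hb (by linarith), Real.rpow_one]
  have hK : (0:ℝ) ≤ 1 + max 1 p := by positivity
  calc ‖Fp p (c₁ + c₂) - Fp p c₁‖
      ≤ (1 + max 1 p) * (2 ^ p * (a ^ p + b ^ p)) * b := by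
        refine h1.trans ?_
        gcongr
    _ = (1 + max 1 p) * 2 ^ p * (b ^ (p + 1) + b * a ^ p) := by rw [← hbp1]; ring

lemma two_term_aux (p : ℝ) (hp : 0 < p) {z w : ℂ} (h : ‖z‖ ≤ ‖w‖) :
    ‖Fp p (z + w) - Fp p z - Fp p w‖ ≤
      ((1 + max 1 p) * 2 ^ p + 1) * (‖z‖ * ‖w‖ ^ p) := by
  set a := ‖z‖
  set b := ‖w‖
  have ha : 0 ≤ a := norm_nonneg _
  have hb : 0 ≤ b := norm_nonneg _
  have h1 := key_le' p hp (z + w) w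
  have habs : ‖z + w - w‖ = a := by ring_nf; rfl
  rw [habs] at h1
  have hM : max (‖z + w‖) b ≤ 2 * b := by
    refine max_le ?_ (by linarith)
    calc ‖z + w‖ ≤ a + b := norm_add_le _ _
      _ ≤ 2 * b := by linarith
  have hMp : max (‖z + w‖) b ^ p ≤ 2 ^ p * b ^ p := by
    calc max (‖z + w‖) b ^ p ≤ (2 * b) ^ p :=
        Real.rpow_le_rpow (le_max_of_le_right hb) hM hp.le
      _ = 2 ^ p * b ^ p := Real.mul_rpow (by norm_num) hb
  have h2 : ‖Fp p z‖ ≤ a * b ^ p := by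
    have : ‖Fp p z‖ = a ^ p * a := by
      simp only [Fp, norm_mul, Complex.norm_real, Real.norm_eq_abs]
      rw [abs_of_nonneg (Real.rpow_nonneg ha p)]
    rw [this]
    have := Real.rpow_le_rpow ha h hp.le
    nlinarith
  have hK : (0:ℝ) ≤ 1 + max 1 p := by positivity
  calc ‖Fp p (z + w) - Fp p z - Fp p w‖
      ≤ ‖Fp p (z + w) - Fp p w‖ + ‖Fp p z‖ := by
        have : Fp p (z + w) - Fp p z - Fp p w = (Fp p (z + w) - Fp p w) + -(Fp p z) := by ring
        rw [this]
        refine (norm_add_le _ _).trans ?_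
        rw [norm_neg]
    _ ≤ (1 + max 1 p) * (2 ^ p * b ^ p) * a + a * b ^ p := by
        refine add_le_add (h1.trans ?_) h2
        gcongr
    _ = ((1 + max 1 p) * 2 ^ p + 1) * (a * b ^ p) := by ring

lemma two_term (p : ℝ) (hp : 0 < p) (z w : ℂ) :
    ‖Fp p (z + w) - Fp p z - Fp p w‖ ≤
      ((1 + max 1 p) * 2 ^ p + 1) *
        (‖z‖ * ‖w‖ ^ p + ‖w‖ * ‖z‖ ^ p) := by
  have hC : (0:ℝ) ≤ (1 + max 1 p) * 2 ^ p + 1 := by positivity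
  rcases le_total (‖z‖) (‖w‖) with h | h
  · have := two_term_aux p hp h
    nlinarith [mul_nonneg (norm_nonneg w) (Real.rpow_nonneg (norm_nonneg z) p)]
  · have := two_term_aux p hp (z := w) (w := z) h
    rw [add_comm w z] at this
    have heq : Fp p (z + w) - Fp p w - Fp p z = Fp p (z + w) - Fp p z - Fp p w := by ring
    rw [heq] at this
    nlinarith [mul_nonneg (norm_nonneg z) (Real.rpow_nonneg (norm_nonneg w) p)]

lemma sum_rpow_le (p : ℝ) (hp : 0 < p) (J : ℕ) (a : Fin J → ℝ) (ha : ∀ j, 0 ≤ a j) :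
    (∑ j, a j) ^ p ≤ (J : ℝ) ^ p * ∑ j, a j ^ p := by
  rcases Nat.eq_zero_or_pos J with hJ | hJ
  · subst hJ
    simp [Real.zero_rpow hp.ne']
  · have hne : (Finset.univ : Finset (Fin J)).Nonempty := by
      simp [Finset.univ_nonempty_iff, Fin.pos_iff_nonempty.mp hJ]
    obtain ⟨m, -, hm⟩ := Finset.exists_max_image Finset.univ a hne
    have hsum : ∑ j, a j ≤ (J : ℝ) * a m := by
      calc ∑ j, a j ≤ ∑ _j : Fin J, a m := Finset.sum_le_sum (fun j _ => hm j (Finset.mem_univ j))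
        _ = (J : ℝ) * a m := by simp [mul_comm]
    have ham : 0 ≤ a m := ha m
    have h1 : (∑ j, a j) ^ p ≤ ((J : ℝ) * a m) ^ p :=
      Real.rpow_le_rpow (Finset.sum_nonneg fun j _ => ha j) hsum hp.le
    have h2 : ((J : ℝ) * a m) ^ p = (J : ℝ) ^ p * a m ^ p :=
      Real.mul_rpow (Nat.cast_nonneg J) ham
    have h3 : a m ^ p ≤ ∑ j, a j ^ p :=
      Finset.single_le_sum (fun j _ => Real.rpow_nonneg (ha j) p) (Finset.mem_univ m)
    have hJp : (0:ℝ) ≤ (J : ℝ) ^ p := Real.rpow_nonneg (Nat.cast_nonneg J) p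
    calc (∑ j, a j) ^ p ≤ (J : ℝ) ^ p * a m ^ p := by rw [← h2]; exact h1
      _ ≤ (J : ℝ) ^ p * ∑ j, a j ^ p := by nlinarith

lemma part_two (p : ℝ) (hp : 0 < p) : ∀ J : ℕ, ∃ C : ℝ, 0 < C ∧ ∀ c : Fin J → ℂ,
    ‖Fp p (∑ j, c j) - ∑ j, Fp p (c j)‖ ≤
      C * ∑ j : Fin J, ∑ k : Fin J,
        (if j ≠ k then ‖c j‖ * ‖c k‖ ^ p else 0) := by
  intro J
  induction J with
  | zero =>
    refine ⟨1, one_pos, fun c => ?_⟩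
    simp [Fp, Real.zero_rpow hp.ne']
  | succ J ih =>
    obtain ⟨C, hC, hrec⟩ := ih
    set C2 : ℝ := (1 + max 1 p) * 2 ^ p + 1 with hC2def
    have hC2 : 0 < C2 := by positivity
    have hJp : (0:ℝ) ≤ (J : ℝ) ^ p := Real.rpow_nonneg (Nat.cast_nonneg J) p
    refine ⟨C + C2 * (1 + (J : ℝ) ^ p), by positivity, fun c => ?_⟩
    set d : Fin J → ℂ := fun j => c j.castSucc with hd
    set S : ℂ := ∑ j, d j with hS
    set e : ℂ := c (Fin.last J) with he
    have hsum : ∑ j, c j = S + e := Fin.sum_univ_castSucc c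
    have hsumF : ∑ j, Fp p (c j) = (∑ j, Fp p (d j)) + Fp p e := Fin.sum_univ_castSucc _
    -- nonneg facts
    have habs : ∀ z : ℂ, 0 ≤ ‖z‖ := fun z => norm_nonneg z
    have hrp : ∀ z : ℂ, 0 ≤ ‖z‖ ^ p := fun z => Real.rpow_nonneg (habs z) p
    -- split of the double sum
    have hD : (∑ j : Fin (J+1), ∑ k : Fin (J+1),
          (if j ≠ k then ‖c j‖ * ‖c k‖ ^ p else 0)) =
        (∑ j : Fin J, ∑ k : Fin J,
          (if j ≠ k then ‖d j‖ * ‖d k‖ ^ p else 0))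
        + (∑ j : Fin J, ‖d j‖ * ‖e‖ ^ p)
        + (∑ k : Fin J, ‖e‖ * ‖d k‖ ^ p) := by
      rw [Fin.sum_univ_castSucc
        (f := fun j => ∑ k : Fin (J+1), (if j ≠ k then ‖c j‖ * ‖c k‖ ^ p else 0))]
      congr 1
      · rw [← Finset.sum_add_distrib]
        refine Finset.sum_congr rfl fun j _ => ?_
        rw [Fin.sum_univ_castSucc
          (f := fun k => (if j.castSucc ≠ k then ‖c j.castSucc‖ * ‖c k‖ ^ p else 0))]
        congr 1
        · refine Finset.sum_congr rfl fun k _ => ?_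
          simp [hd, Fin.castSucc_inj]
        · simp [hd, he, (Fin.castSucc_lt_last j).ne]
      · rw [Fin.sum_univ_castSucc
          (f := fun k => (if Fin.last J ≠ k then ‖c (Fin.last J)‖ * ‖c k‖ ^ p else 0))]
        simp [hd, he, fun k : Fin J => (Fin.castSucc_lt_last k).ne']
    -- main estimates
    have hA : ‖S‖ * ‖e‖ ^ p ≤ ∑ j : Fin J, ‖d j‖ * ‖e‖ ^ p := by
      rw [← Finset.sum_mul]
      exact mul_le_mul_of_nonneg_right (norm_sum_le _ _) (hrp e)
    have hB : ‖e‖ * ‖S‖ ^ p ≤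
        (J : ℝ) ^ p * ∑ k : Fin J, ‖e‖ * ‖d k‖ ^ p := by
      have h1 : ‖S‖ ^ p ≤ (∑ j, ‖d j‖) ^ p :=
        Real.rpow_le_rpow (habs S) (norm_sum_le _ _) hp.le
      have h2 := sum_rpow_le p hp J (fun j => ‖d j‖) (fun j => habs _)
      calc ‖e‖ * ‖S‖ ^ p
          ≤ ‖e‖ * ((J : ℝ) ^ p * ∑ j, ‖d j‖ ^ p) := by
            refine mul_le_mul_of_nonneg_left (h1.trans h2) (habs e)
        _ = (J : ℝ) ^ p * ∑ k : Fin J, ‖e‖ * ‖d k‖ ^ p := by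
            simp only [Finset.mul_sum]
            exact Finset.sum_congr rfl fun k _ => by ring
    have htri : ‖Fp p (∑ j, c j) - ∑ j, Fp p (c j)‖ ≤
        ‖Fp p (S + e) - Fp p S - Fp p e‖ + ‖Fp p S - ∑ j, Fp p (d j)‖ := by
      rw [hsum, hsumF]
      have : Fp p (S + e) - ((∑ j, Fp p (d j)) + Fp p e) =
          (Fp p (S + e) - Fp p S - Fp p e) + (Fp p S - ∑ j, Fp p (d j)) := by ring
      rw [this]
      exact norm_add_le _ _
    have h2t := two_term p hp S e
    have hr := hrec d
    -- nonneg of the three sum pieces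
    have hSA : 0 ≤ ∑ j : Fin J, ‖d j‖ * ‖e‖ ^ p :=
      Finset.sum_nonneg fun j _ => mul_nonneg (habs _) (hrp _)
    have hSB : 0 ≤ ∑ k : Fin J, ‖e‖ * ‖d k‖ ^ p :=
      Finset.sum_nonneg fun k _ => mul_nonneg (habs _) (hrp _)
    have hDJ : 0 ≤ ∑ j : Fin J, ∑ k : Fin J,
        (if j ≠ k then ‖d j‖ * ‖d k‖ ^ p else 0) := by
      refine Finset.sum_nonneg fun j _ => Finset.sum_nonneg fun k _ => ?_
      split <;> [exact mul_nonneg (habs _) (hrp _); exact le_refl 0]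
    rw [hD]
    have hx : ‖Fp p (S + e) - Fp p S - Fp p e‖ ≤
        C2 * (∑ j : Fin J, ‖d j‖ * ‖e‖ ^ p)
          + C2 * ((J : ℝ) ^ p * ∑ k : Fin J, ‖e‖ * ‖d k‖ ^ p) := by
      refine h2t.trans ?_
      have := add_le_add (mul_le_mul_of_nonneg_left hA hC2.le)
        (mul_le_mul_of_nonneg_left hB hC2.le)
      calc C2 * (‖S‖ * ‖e‖ ^ p + ‖e‖ * ‖S‖ ^ p)
          = C2 * (‖S‖ * ‖e‖ ^ p) + C2 * (‖e‖ * ‖S‖ ^ p) := by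
            ring
        _ ≤ _ := this
    refine htri.trans ((add_le_add hx hr).trans ?_)
    nlinarith [mul_nonneg hC.le hSA, mul_nonneg hC.le hSB, mul_nonneg hC2.le hSB,
      mul_nonneg hC2.le hDJ, mul_nonneg (mul_nonneg hC2.le hJp) hSA,
      mul_nonneg (mul_nonneg hC2.le hJp) hDJ]



/-- Pointwise nonlinear estimates, Lemma 2.1: for `f(z) = |z|^p z`,
`|f(c₁+c₂) − f(c₁)| ≤ C_p (|c₂|^{p+1} + |c₂||c₁|^p)` and
`|f(Σ c_j) − Σ f(c_j)| ≤ C_{J,p} Σ_{j≠k} |c_j||c_k|^p`. -/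
theorem nls2d_pointwise_estimates (p : ℝ) (hp : 0 < p) :
    (∃ C : ℝ, 0 < C ∧ ∀ c₁ c₂ : ℂ,
      ‖((‖c₁ + c₂‖ ^ p : ℝ) : ℂ) * (c₁ + c₂) -
          ((‖c₁‖ ^ p : ℝ) : ℂ) * c₁‖ ≤
        C * (‖c₂‖ ^ (p + 1) + ‖c₂‖ * ‖c₁‖ ^ p)) ∧
    (∀ J : ℕ, ∃ C : ℝ, 0 < C ∧ ∀ c : Fin J → ℂ,
      ‖((‖∑ j, c j‖ ^ p : ℝ) : ℂ) * (∑ j, c j) -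
          ∑ j, ((‖c j‖ ^ p : ℝ) : ℂ) * c j‖ ≤
        C * ∑ j : Fin J, ∑ k : Fin J,
          (if j ≠ k then ‖c j‖ * ‖c k‖ ^ p else 0)) := by
  constructor
  · obtain ⟨C, hC, h⟩ := part_one p hp
    exact ⟨C, hC, fun c₁ c₂ => h c₁ c₂⟩
  · intro J
    obtain ⟨C, hC, h⟩ := part_two p hp J
    exact ⟨C, hC, fun c => h c⟩
end
end

section
/- (Decay at infinity of the weight for p ≤ 2) Let a : ℝ² → ℝ be nonnegative and differentiable with x·∇a(x) ≤ 0 for all x ∈ ℝ², and suppose a ∈ L¹(ℝ²) and ∇a ∈ L^∞(ℝ²). Then a(x) → 0 as |x| → ∞. -/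
open MeasureTheory Filter
open scoped ENNReal Topology ComplexConjugate FourierTransform RealInnerProductSpace

noncomputable section

open NLS2d

namespace NLS2dWeightDecayAux

theorem wd_slicing (v : Plane) (B : Set Plane) (hB : volume B = 0) :
    ∀ᵐ x : Plane, ∀ᵐ t : ℝ, x + t • v ∉ B := by
  obtain ⟨N, hBN, hNm, hN0⟩ := exists_measurable_superset_of_null hB
  have key : (volume.prod (volume : Measure ℝ)) {p : Plane × ℝ | p.1 + p.2 • v ∈ N} = 0 := by
    have hmeas : MeasurableSet {p : Plane × ℝ | p.1 + p.2 • v ∈ N} := by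
      have : Measurable fun p : Plane × ℝ => p.1 + p.2 • v :=
        measurable_fst.add (measurable_snd.smul_const v)
      exact this hNm
    rw [MeasureTheory.Measure.prod_apply_symm hmeas]
    have : ∀ t : ℝ, (volume : Measure Plane) ((fun x => (x, t)) ⁻¹' {p : Plane × ℝ | p.1 + p.2 • v ∈ N}) = 0 := by
      intro t
      have : ((fun x : Plane => (x, t)) ⁻¹' {p : Plane × ℝ | p.1 + p.2 • v ∈ N})
          = (fun x : Plane => x + t • v) ⁻¹' N := rfl
      rw [this, measure_preimage_add_right]
      exact hN0
    simp only [Set.preimage_setOf_eq] at this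
    simp [this]
  have hae := MeasureTheory.Measure.ae_ae_of_ae_prod (by
    rw [MeasureTheory.ae_iff]
    convert key using 2
    ext p
    · rfl
    simp : ∀ᵐ p : Plane × ℝ, p.1 + p.2 • v ∉ N)
  filter_upwards [hae] with x hx
  filter_upwards [hx] with t ht
  exact fun h => ht (hBN h)

theorem wd_lipbound (a : Plane → ℝ) (hd : Differentiable ℝ a) (C : ℝ) (hC0 : 0 ≤ C)
    (hC : ∀ᵐ x : Plane, ‖fderiv ℝ a x‖ ≤ C) : ∀ x y : Plane, |a y - a x| ≤ C * ‖y - x‖ := by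
  have key : ∀ v : Plane, ∀ x : Plane, |a (x + v) - a x| ≤ C * ‖v‖ := by
    intro v
    have hB : volume {x : Plane | ¬ ‖fderiv ℝ a x‖ ≤ C} = 0 := hC
    have hae : ∀ᵐ x : Plane, |a (x + v) - a x| ≤ C * ‖v‖ := by
      filter_upwards [wd_slicing v _ hB] with x hx
      set g' : ℝ → ℝ := fun t => fderiv ℝ a (x + t • v) v with hg'
      have hmeas : Measurable g' := by
        exact (measurable_fderiv_apply_const ℝ a v).comp
          (measurable_const.add (measurable_id.smul_const v))
      have hbd : ∀ᵐ t : ℝ, ‖g' t‖ ≤ C * ‖v‖ := by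
        filter_upwards [hx] with t ht
        rw [not_not] at ht
        calc ‖g' t‖ ≤ ‖fderiv ℝ a (x + t • v)‖ * ‖v‖ := (fderiv ℝ a (x + t • v)).le_opNorm v
          _ ≤ C * ‖v‖ := by gcongr
      have hderiv : ∀ t ∈ Set.uIcc (0:ℝ) 1, HasDerivAt (fun s => a (x + s • v)) (g' t) t := by
        intro t _
        have h1 : HasDerivAt (fun s : ℝ => x + s • v) v t := by
          simpa using ((hasDerivAt_id t).smul_const v).const_add x
        exact ((hd (x + t • v)).hasFDerivAt.comp_hasDerivAt t h1)
      have hint : IntervalIntegrable g' volume 0 1 := by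
        rw [intervalIntegrable_iff]
        have hfin : Integrable (fun _ : ℝ => C * ‖v‖) (volume.restrict (Set.uIoc 0 1)) := by
          rw [integrable_const_iff]
          right
          rw [Set.uIoc_of_le (by norm_num : (0:ℝ) ≤ 1)]
          infer_instance
        exact Integrable.mono' hfin (hmeas.aestronglyMeasurable.restrict) (ae_restrict_of_ae hbd)
      have hftc := intervalIntegral.integral_eq_sub_of_hasDerivAt hderiv hint
      simp only [one_smul, zero_smul, add_zero] at hftc
      have : |∫ t in (0:ℝ)..1, g' t| ≤ C * ‖v‖ := by
        have := intervalIntegral.norm_integral_le_abs_of_norm_le (a := (0:ℝ)) (b := 1)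
          (g := fun _ => C * ‖v‖) (ae_restrict_of_ae hbd) (intervalIntegrable_const)
        simp only [intervalIntegral.integral_const, smul_eq_mul, sub_zero, one_mul,
          abs_of_nonneg (by positivity : (0:ℝ) ≤ C * ‖v‖), Real.norm_eq_abs] at this
        exact this
      rw [← hftc]
      exact this
    by_contra hcon
    push_neg at hcon
    obtain ⟨x₀, hx₀⟩ := hcon
    have hopen : IsOpen {x : Plane | C * ‖v‖ < |a (x + v) - a x|} := by
      have hcont : Continuous fun x : Plane => |a (x + v) - a x| := by
        exact ((hd.continuous.comp (continuous_id.add continuous_const)).sub hd.continuous).abs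
      exact isOpen_lt continuous_const hcont
    have hpos := hopen.measure_pos (volume) ⟨x₀, hx₀⟩
    have : (volume : Measure Plane) {x : Plane | C * ‖v‖ < |a (x + v) - a x|} = 0 := by
      refine measure_mono_null ?_ hae
      intro x hx
      simpa using hx
    simp [this] at hpos
  intro x y
  simpa using key (y - x) x

theorem wd_ray_antitone (a : Plane → ℝ) (hd : Differentiable ℝ a)
    (hrep : ∀ x : Plane, ⟪x, gradient a x⟫ ≤ 0) (u : Plane) :
    AntitoneOn (fun t : ℝ => a (t • u)) (Set.Ioi 0) := by
  have hder : ∀ t : ℝ, HasDerivAt (fun s : ℝ => a (s • u)) (fderiv ℝ a (t • u) u) t := by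
    intro t
    have h1 : HasDerivAt (fun s : ℝ => s • u) u t := by
      simpa using (hasDerivAt_id t).smul_const u
    exact (hd (t • u)).hasFDerivAt.comp_hasDerivAt t h1
  apply antitoneOn_of_deriv_nonpos (convex_Ioi 0)
  · exact (hd.continuous.comp (continuous_id.smul continuous_const)).continuousOn
  · intro t _
    exact (hder t).differentiableAt.differentiableWithinAt
  · intro t ht
    rw [interior_Ioi] at ht
    rw [(hder t).deriv]
    have heq : fderiv ℝ a (t • u) u = ⟪gradient a (t • u), u⟫ := by
      rw [gradient, ← InnerProductSpace.toDual_apply_apply,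
        LinearIsometryEquiv.apply_symm_apply]
    rw [heq, real_inner_comm]
    have h2 := hrep (t • u)
    rw [real_inner_smul_left] at h2
    exact nonpos_of_mul_nonpos_right h2 ht

end NLS2dWeightDecayAux

/-- Decay at infinity of the weight: a nonnegative, differentiable,
repulsive (`x·∇a(x) ≤ 0`) weight with `a ∈ L¹(ℝ²)` and `∇a ∈ L^∞(ℝ²)` tends to `0`
at spatial infinity. -/
theorem nls2d_weight_decay
    (a : Plane → ℝ) (h0 : ∀ x, 0 ≤ a x) (hd : Differentiable ℝ a)
    (hrep : ∀ x : Plane, ⟪x, gradient a x⟫ ≤ 0)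
    (hL1 : Integrable a volume) (hLinf : MemLp (gradient a) ⊤ volume) :
    Tendsto a (Filter.cocompact Plane) (𝓝 0) := by
  -- extract an a.e. bound on the gradient
  set S : ENNReal := eLpNormEssSup (gradient a) volume with hS
  have hSfin : S < ⊤ := by
    have := hLinf.2
    rwa [eLpNorm_exponent_top] at this
  set C : ℝ := max S.toReal 1 with hCdef
  have hC1 : (1:ℝ) ≤ C := le_max_right _ _
  have hC0 : (0:ℝ) < C := lt_of_lt_of_le one_pos hC1
  have hCbd : ∀ᵐ x : Plane, ‖fderiv ℝ a x‖ ≤ C := by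
    filter_upwards [ae_le_eLpNormEssSup (f := gradient a) (μ := volume)] with x hx
    have h1 : ‖fderiv ℝ a x‖ = ‖gradient a x‖ := by
      rw [gradient]
      exact (LinearIsometryEquiv.norm_map _ _).symm
    have h2 : ‖gradient a x‖ ≤ S.toReal := by
      calc ‖gradient a x‖ = ((‖gradient a x‖₊ : ENNReal)).toReal := by simp
        _ ≤ S.toReal := ENNReal.toReal_mono hSfin.ne hx
    rw [h1]
    exact h2.trans (le_max_left _ _)
  have hlip : ∀ x y : Plane, |a y - a x| ≤ C * ‖y - x‖ :=
    NLS2dWeightDecayAux.wd_lipbound a hd C hC0.le hCbd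
  -- reduce to boundedness of superlevel sets
  rw [Metric.tendsto_nhds]
  intro ε hε
  -- geometric setup
  set r : ℝ := min (ε / (2 * C)) 1 with hrdef
  have hr0 : 0 < r := lt_min (by positivity) one_pos
  have hr1 : r ≤ 1 := min_le_right _ _
  have hCr : C * r ≤ ε / 2 := by
    have : r ≤ ε / (2 * C) := min_le_left _ _
    calc C * r ≤ C * (ε / (2 * C)) := by gcongr
      _ = ε / 2 := by field_simp
  set m : ℝ := ε / 2 * (volume (Metric.ball (0:Plane) r)).toReal with hmdef
  have hm0 : 0 < m := by
    apply mul_pos (by positivity)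
    apply ENNReal.toReal_pos (Metric.measure_ball_pos volume 0 hr0).ne' measure_ball_lt_top.ne
  obtain ⟨N, hN⟩ := exists_nat_gt ((∫ x : Plane, a x) / m)
  have hN' : (∫ x : Plane, a x) < N * m := by
    rwa [div_lt_iff₀ hm0] at hN
  set R : ℝ := 3 * (N + 1) with hRdef
  -- key claim
  have key : ∀ x : Plane, R ≤ ‖x‖ → a x < ε := by
    intro x hRx
    by_contra hcon
    push_neg at hcon
    have hL0 : (0:ℝ) < ‖x‖ := lt_of_lt_of_le (by positivity) hRx
    set u : Plane := ‖x‖⁻¹ • x with hudef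
    have hu : ‖u‖ = 1 := by
      rw [hudef, norm_smul, norm_inv, norm_norm, inv_mul_cancel₀ hL0.ne']
    have hxu : ‖x‖ • u = x := by
      rw [hudef, smul_smul, mul_inv_cancel₀ hL0.ne', one_smul]
    set c : ℕ → Plane := fun j => (3 * ((j:ℝ) + 1)) • u with hcdef
    have hcj : ∀ j : ℕ, j < N → ε ≤ a (c j) := by
      intro j hj
      have h3j : (0:ℝ) < 3 * ((j:ℝ) + 1) := by positivity
      have hle : 3 * ((j:ℝ) + 1) ≤ ‖x‖ := by
        have : ((j:ℝ) + 1) ≤ (N:ℝ) + 1 := by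
          have : ((j:ℝ)) ≤ (N:ℝ) := by exact_mod_cast hj.le
          linarith
        calc 3 * ((j:ℝ) + 1) ≤ 3 * ((N:ℝ) + 1) := by linarith
          _ ≤ ‖x‖ := hRx
      have := NLS2dWeightDecayAux.wd_ray_antitone a hd hrep u (Set.mem_Ioi.2 h3j) (Set.mem_Ioi.2 hL0) hle
      simp only at this
      rw [hxu] at this
      exact le_trans hcon this
    have hball : ∀ j : ℕ, j < N → ∀ z ∈ Metric.ball (c j) r, ε / 2 ≤ a z := by
      intro j hj z hz
      have h1 : |a z - a (c j)| ≤ C * ‖z - c j‖ := hlip (c j) z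
      have h2 : ‖z - c j‖ ≤ r := by
        rw [← dist_eq_norm]
        exact (Metric.mem_ball.1 hz).le
      have h3 : |a z - a (c j)| ≤ ε / 2 := by
        calc |a z - a (c j)| ≤ C * ‖z - c j‖ := h1
          _ ≤ C * r := by gcongr
          _ ≤ ε / 2 := hCr
      have h4 := abs_le.1 h3
      have := hcj j hj
      linarith [h4.1]
    have hdisj : (↑(Finset.range N) : Set ℕ).Pairwise
        (Function.onFun Disjoint fun j => Metric.ball (c j) r) := by
      intro i _ j _ hij
      apply Metric.ball_disjoint_ball
      have hdist : dist (c i) (c j) = 3 * |(i:ℝ) - (j:ℝ)| := by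
        rw [dist_eq_norm, hcdef]
        rw [← sub_smul, norm_smul, hu, mul_one]
        rw [show 3 * ((i:ℝ) + 1) - 3 * ((j:ℝ) + 1) = 3 * ((i:ℝ) - (j:ℝ)) by ring]
        rw [Real.norm_eq_abs, abs_mul, abs_of_nonneg (by norm_num : (0:ℝ) ≤ 3)]
      have h1 : (1:ℝ) ≤ |(i:ℝ) - (j:ℝ)| := by
        rcases Nat.lt_or_ge i j with h | h
        · rw [abs_sub_comm, abs_of_nonneg (sub_nonneg.2 (by exact_mod_cast h.le))]
          have : (i:ℝ) + 1 ≤ (j:ℝ) := by exact_mod_cast h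
          linarith
        · have hij' : j < i := lt_of_le_of_ne h (Ne.symm hij)
          rw [abs_of_nonneg (sub_nonneg.2 (by exact_mod_cast hij'.le))]
          have : (j:ℝ) + 1 ≤ (i:ℝ) := by exact_mod_cast hij'
          linarith
      rw [hdist]
      calc r + r ≤ 1 + 1 := by linarith
        _ ≤ 3 * |(i:ℝ) - (j:ℝ)| := by linarith
    have hunion := integral_biUnion_finset (μ := volume) (f := a) (Finset.range N)
      (fun j _ => measurableSet_ball) hdisj (fun j _ => hL1.integrableOn)
    have hlow : ∀ j ∈ Finset.range N, m ≤ ∫ z in Metric.ball (c j) r, a z := by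
      intro j hj
      rw [Finset.mem_range] at hj
      have h1 := setIntegral_ge_of_const_le (μ := volume) (c := ε / 2)
        measurableSet_ball measure_ball_lt_top.ne (hball j hj) hL1.integrableOn
      have h2 : volume (Metric.ball (c j) r) = volume (Metric.ball (0:Plane) r) :=
        Measure.addHaar_ball_center volume (c j) r
      rw [hmdef, ← h2]
      rw [smul_eq_mul, mul_comm] at h1
      exact h1
    have hsum : (N:ℝ) * m ≤ ∫ z in ⋃ j ∈ Finset.range N, Metric.ball (c j) r, a z := by
      rw [hunion]
      calc (N:ℝ) * m = ∑ _j ∈ Finset.range N, m := by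
            rw [Finset.sum_const, Finset.card_range, nsmul_eq_mul]
        _ ≤ ∑ j ∈ Finset.range N, ∫ z in Metric.ball (c j) r, a z :=
            Finset.sum_le_sum hlow
    have hle : (∫ z in ⋃ j ∈ Finset.range N, Metric.ball (c j) r, a z) ≤ ∫ x : Plane, a x :=
      setIntegral_le_integral hL1 (ae_of_all _ h0)
    linarith
  filter_upwards [tendsto_norm_cocompact_atTop.eventually_ge_atTop R] with x hx
  rw [Real.dist_eq, sub_zero, abs_of_nonneg (h0 x)]
  exact key x hx
end
end
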